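/- Let G be a MAGIIAN, let G^{jK} denote its j-iterated MKBSC expansion (G^{0K} = G, G^{(j+1)K} = (G^{jK})^K), and let j ≥ 1. Every full play π = l_0 σ_0 l_1 σ_1 … in G gives rise to exactly one full play s_0 σ_0 s_1 σ_1 … in G^{jK} that is consistent with the actions and the observations of the agents, i.e., such that ŝ_k(i) ⊆ obs_i(l_k) for all agents i ∈ Agt and all k ≥ 0, where ŝ_k(i) is the flattening of the i-th component of s_k to a set of locations of G. -/
import Mathlib


open Set

/-- A multi-agent game with imperfect information against Nature (MAGIIAN).
`obs i l` is the observation block of agent `i` containing location `l`;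
the axioms make the blocks of each agent a partition of the locations. -/
structure MAGIIAN (Agt Loc : Type) (Act : Agt → Type) where
  init : Loc
  trans : Loc → (∀ i, Act i) → Loc → Prop
  obs : Agt → Loc → Set Loc
  obs_mem : ∀ i l, l ∈ obs i l
  obs_eq : ∀ i l l', l' ∈ obs i l → obs i l' = obs i l

namespace MAGIIAN

variable {Agt Loc : Type} {Act : Agt → Type}

/-- `o` is an observation (block) of agent `i` in `G`. -/
def IsObs (G : MAGIIAN Agt Loc Act) (i : Agt) (o : Set Loc) : Prop :=
  ∃ l, o = G.obs i l

/-- Transition relation `Δ_i` of the projection `G|_i`. -/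
def projTrans (G : MAGIIAN Agt Loc Act) (i : Agt) (l : Loc) (a : Act i) (l' : Loc) : Prop :=
  ∃ σ : ∀ j, Act j, σ i = a ∧ G.trans l σ l'

/-- Transition relation `Δ^K_i` of the individual KBSC expansion `(G|_i)^K`. -/
def kTrans (G : MAGIIAN Agt Loc Act) (i : Agt) (s : Set Loc) (a : Act i) (s' : Set Loc) : Prop :=
  ∃ o : Set Loc, G.IsObs i o ∧ s' = {l' ∈ o | ∃ l ∈ s, G.projTrans i l a l'} ∧ s'.Nonempty

/-- Pruned joint transition relation `Δ^K` of the MKBSC expansion `G^K`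
(unrealisable transitions are removed). -/
def kTransJ (G : MAGIIAN Agt Loc Act) (s : Agt → Set Loc) (σ : ∀ i, Act i)
    (s' : Agt → Set Loc) : Prop :=
  (∀ i, G.kTrans i (s i) (σ i) (s' i)) ∧
    ∃ l ∈ (⋂ i, s i), ∃ l' ∈ (⋂ i, s' i), G.trans l σ l'

/-- The MKBSC expansion `G^K`, as a MAGIIAN over joint knowledge states;
agent `i`'s observation of a joint knowledge state is determined by its `i`-th component. -/
def expand (G : MAGIIAN Agt Loc Act) : MAGIIAN Agt (Agt → Set Loc) Act where
  init := fun _ => {G.init}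
  trans := G.kTransJ
  obs := fun i s => {s' | s' i = s i}
  obs_mem := fun _ _ => rfl
  obs_eq := by
    intro i s s' h
    simp only [Set.mem_setOf_eq] at h
    ext t
    simp [Set.mem_setOf_eq, h]

/-- Reachability from the initial location. -/
def Reachable (G : MAGIIAN Agt Loc Act) (l : Loc) : Prop :=
  Relation.ReflTransGen (fun x y => ∃ σ, G.trans x σ y) G.init l

/-- The MKBSC expansion `G^K` fulfills the perfect-distributed-knowledge (PDK) condition:
every reachable joint knowledge state has singleton component intersection. -/
def PDK (G : MAGIIAN Agt Loc Act) : Prop :=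
  ∀ s : Agt → Set Loc, G.expand.Reachable s → ∃ l : Loc, (⋂ i, s i) = {l}

/-- A full play, given as its sequences of locations and of joint actions. -/
def IsPlay (G : MAGIIAN Agt Loc Act) (l : ℕ → Loc) (σ : ℕ → ∀ i, Act i) : Prop :=
  l 0 = G.init ∧ ∀ k, G.trans (l k) (σ k) (l (k + 1))

/-- Observation history of agent `i` (list of observation blocks) up to time `k`. -/
def obsHist (G : MAGIIAN Agt Loc Act) (i : Agt) (l : ℕ → Loc) (k : ℕ) : List (Set Loc) :=
  (List.range (k + 1)).map fun j => G.obs i (l j)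

/-- Outcomes (location sequences) of a profile of observation-based
perfect-recall strategies. -/
def PROutcome (G : MAGIIAN Agt Loc Act) (α : ∀ i, List (Set Loc) → Act i)
    (l : ℕ → Loc) : Prop :=
  ∃ σ : ℕ → ∀ i, Act i, G.IsPlay l σ ∧ ∀ k i, σ k i = α i (G.obsHist i l k)

/-- Outcomes of a profile of observation-based memoryless strategies. -/
def MLOutcome (G : MAGIIAN Agt Loc Act) (α : ∀ i, Set Loc → Act i) (l : ℕ → Loc) : Prop :=
  ∃ σ : ℕ → ∀ i, Act i, G.IsPlay l σ ∧ ∀ k i, σ k i = α i (G.obs i (l k))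

/-- A play is winning for an observable reachability objective `R` iff some
agent at some point observes an observation in `R`. -/
def WinsReach (G : MAGIIAN Agt Loc Act) (R : Set (Set Loc)) (l : ℕ → Loc) : Prop :=
  ∃ i k, G.obs i (l k) ∈ R

/-- A play is winning for an observable safety objective `F` iff at every point
some agent observes an observation in `F`. -/
def WinsSafe (G : MAGIIAN Agt Loc Act) (F : Set (Set Loc)) (l : ℕ → Loc) : Prop :=
  ∀ k, ∃ i, G.obs i (l k) ∈ F

/-- `ob_i`: maps an observation block of `G^K` for agent `i` (all of whose members have the
same `i`-th component `A`) to the unique observation of `i` in `G` that includes `A`. -/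
def obMap (G : MAGIIAN Agt Loc Act) (i : Agt) (O : Set (Agt → Set Loc)) : Set Loc :=
  ⋃ s ∈ O, ⋃ l ∈ s i, G.obs i l

/-- The translated objective `R^K = {s ∈ S : ∃ i, ∃ o ∈ R ∩ Obs_i, s i ⊆ o}`,
as a set of joint knowledge states. -/
def transObj (G : MAGIIAN Agt Loc Act) (R : Set (Set Loc)) : Set (Agt → Set Loc) :=
  {s | ∃ i, ∃ o ∈ R, G.IsObs i o ∧ s i ⊆ o}

end MAGIIAN

namespace MAGIIAN

variable {Agt Loc : Type} {Act : Agt → Type}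

/-- `ExpLoc Agt Loc j` is the type of locations of the `j`-iterated MKBSC
expansion `G^{jK}` (also the type `B^(j)` of the knowledge hierarchy). -/
def ExpLoc (Agt Loc : Type) : ℕ → Type
  | 0 => Loc
  | j + 1 => Agt → Set (ExpLoc Agt Loc j)

/-- The `j`-iterated MKBSC expansion `G^{jK}` (`G^{0K} = G`). -/
def iterExpand (G : MAGIIAN Agt Loc Act) : (j : ℕ) → MAGIIAN Agt (ExpLoc Agt Loc j) Act
  | 0 => G
  | j + 1 => (iterExpand G j).expand

/-- Flattening `ŝ` of a knowledge state `s` of `(G^{jK}|_i)^K` (a set of locations of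
`G^{jK}`) to a set of locations of `G`, obtained by repeatedly taking the (common)
`i`-th component. -/
def hatSet (i : Agt) : (j : ℕ) → Set (ExpLoc Agt Loc j) → Set Loc
  | 0, s => s
  | j + 1, s => hatSet i j (⋃ t ∈ s, t i)

/-- Iterated intersection `⩀s` of a joint knowledge state of `G^{jK}`,
yielding a set of locations of `G`. -/
def capAll : (j : ℕ) → ExpLoc Agt Loc j → Set Loc
  | 0, l => {l}
  | j + 1, s => ⋃ t ∈ (⋂ i, s i), capAll j t

/-- A possible observation profile of `G`. -/
def possibleProfile (G : MAGIIAN Agt Loc Act) (o : Agt → Set Loc) : Prop :=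
  (∀ i, G.IsObs i (o i)) ∧ (⋂ i, o i).Nonempty

/-- Generalised knowledge update: `gdelta G j` is `δ^{j+1}` (so `gdelta G 0 = δ`),
acting on `A^{(j+1)} = Set (ExpLoc Agt Loc j)`; inconsistent tuples are pruned out. -/
def gdelta (G : MAGIIAN Agt Loc Act) :
    (j : ℕ) → (i : Agt) → Set (ExpLoc Agt Loc j) → Act i → Set Loc → Set (ExpLoc Agt Loc j)
  | 0, i, s, a, o => {l' ∈ o | ∃ σ : ∀ j', Act j', σ i = a ∧ ∃ l ∈ s, G.trans l σ l'}
  | j + 1, i, s, a, o =>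
      {t' | (⋂ i', t' i').Nonempty ∧
        ∃ t ∈ s, ∃ σ : ∀ j', Act j', ∃ ob : Agt → Set Loc,
          G.possibleProfile ob ∧ σ i = a ∧ ob i = o ∧
          t' = fun i' => gdelta G j i' (t i') (σ i') (ob i')}

/-- Translation of an observable objective of `H` (a set of observation blocks)
to an observable objective of `H^K`. -/
def trObj {L : Type} (H : MAGIIAN Agt L Act) (R : Set (Set L)) :
    Set (Set (Agt → Set L)) :=
  {O | ∃ (i : Agt) (A : Set L), O = {s | s i = A} ∧ ∃ o ∈ R, H.IsObs i o ∧ A ⊆ o}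

/-- The `j`-iterated translation `R^{jK}` of an observable objective `R` of `G`. -/
def iterObj (G : MAGIIAN Agt Loc Act) (R : Set (Set Loc)) :
    (j : ℕ) → Set (Set (ExpLoc Agt Loc j))
  | 0 => R
  | j + 1 => trObj (iterExpand G j) (iterObj G R j)

/-- Outcomes in `G` of a profile of generalised induced transducers
`{A_i(α_i)}`, for a profile `α` of memoryless strategies on the knowledge states of
`(G^{mK}|_i)^K` (i.e. of observation-based memoryless strategies in `G^{(m+1)K}`):
each agent `i` starts with memory `{init of G^{mK}}`, plays `α i` on its current memory
state, and updates its memory to the unique `Δ^{(m+1)K}_i`-successor that is consistent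
with its new observation. -/
def gTransducerOutcome (G : MAGIIAN Agt Loc Act) (m : ℕ)
    (α : ∀ i, Set (ExpLoc Agt Loc m) → Act i) (l : ℕ → Loc) : Prop :=
  l 0 = G.init ∧ ∃ σ : ℕ → ∀ i, Act i, ∃ mem : (i : Agt) → ℕ → Set (ExpLoc Agt Loc m),
    (∀ i, mem i 0 = {(iterExpand G m).init}) ∧
    (∀ k, G.trans (l k) (σ k) (l (k + 1))) ∧
    (∀ k i, σ k i = α i (mem i k)) ∧
    (∀ k i, (iterExpand G m).kTrans i (mem i k) (σ k i) (mem i (k + 1)) ∧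
      hatSet i m (mem i (k + 1)) ⊆ G.obs i (l (k + 1)))

/-- Outcomes in `G^{(m+1)K}` of a profile of observation-based memoryless strategies
(each agent's action depending only on the `i`-th component of the current joint
knowledge state). -/
def gKMLOutcome (G : MAGIIAN Agt Loc Act) (m : ℕ)
    (α : ∀ i, Set (ExpLoc Agt Loc m) → Act i) (s : ℕ → ExpLoc Agt Loc (m + 1)) : Prop :=
  ∃ σ : ℕ → ∀ i, Act i, s 0 = (iterExpand G (m + 1)).init ∧
    (∀ k, (iterExpand G (m + 1)).trans (s k) (σ k) (s (k + 1))) ∧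
    (∀ k i, σ k i = α i (s k i))

/-- Outcomes in `G` of a profile of `(m+1)`-order knowledge-based strategies based on
`α` and the generalised knowledge update `δ^{m+1} = gdelta G m`. -/
def gKBOutcome (G : MAGIIAN Agt Loc Act) (m : ℕ)
    (α : ∀ i, Set (ExpLoc Agt Loc m) → Act i) (l : ℕ → Loc) : Prop :=
  l 0 = G.init ∧ ∃ σ : ℕ → ∀ i, Act i, ∃ mem : (i : Agt) → ℕ → Set (ExpLoc Agt Loc m),
    (∀ i, mem i 0 = {(iterExpand G m).init}) ∧
    (∀ k, G.trans (l k) (σ k) (l (k + 1))) ∧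
    (∀ k i, σ k i = α i (mem i k)) ∧
    (∀ k i, mem i (k + 1) = gdelta G m i (mem i k) (σ k i) (G.obs i (l (k + 1))) ∧
      (mem i (k + 1)).Nonempty)

end MAGIIAN


namespace MAGIIAN

variable {Agt Loc : Type} {Act : Agt → Type}

section OneStep

variable {L' : Type}

/-- Canonical knowledge tracking of a play `L, τ` in `H`. -/
def canon (H : MAGIIAN Agt L' Act) (L : ℕ → L') (τ : ℕ → ∀ i, Act i) : ℕ → Agt → Set L'
  | 0 => fun _ => {H.init}
  | k + 1 => fun i =>
      {l' ∈ H.obs i (L (k + 1)) | ∃ l ∈ canon H L τ k i, H.projTrans i l (τ k i) l'}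

theorem canon_mem (H : MAGIIAN Agt L' Act) {L : ℕ → L'} {τ : ℕ → ∀ i, Act i}
    (h0 : L 0 = H.init) (htr : ∀ k, H.trans (L k) (τ k) (L (k + 1))) :
    ∀ k i, L k ∈ canon H L τ k i
  | 0, i => by simp [canon, h0]
  | k + 1, i => ⟨H.obs_mem i _, L k, canon_mem H h0 htr k i, τ k, rfl, htr k⟩

theorem canon_subset (H : MAGIIAN Agt L' Act) {L : ℕ → L'} {τ : ℕ → ∀ i, Act i}
    (h0 : L 0 = H.init) :
    ∀ k i, canon H L τ k i ⊆ H.obs i (L k)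
  | 0, i => by
      intro x hx
      simp only [canon, Set.mem_singleton_iff] at hx
      subst hx; rw [h0]; exact H.obs_mem i _
  | k + 1, i => fun x hx => hx.1

theorem canon_kTransJ (H : MAGIIAN Agt L' Act) {L : ℕ → L'} {τ : ℕ → ∀ i, Act i}
    (h0 : L 0 = H.init) (htr : ∀ k, H.trans (L k) (τ k) (L (k + 1))) (k : ℕ) :
    H.kTransJ (canon H L τ k) (τ k) (canon H L τ (k + 1)) := by
  refine ⟨fun i => ⟨H.obs i (L (k + 1)), ⟨L (k + 1), rfl⟩, rfl,
      ⟨L (k + 1), canon_mem H h0 htr (k + 1) i⟩⟩, ?_⟩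
  exact ⟨L k, Set.mem_iInter.2 fun i => canon_mem H h0 htr k i,
    L (k + 1), Set.mem_iInter.2 fun i => canon_mem H h0 htr (k + 1) i, htr k⟩

theorem canon_unique (H : MAGIIAN Agt L' Act) {L : ℕ → L'} {τ : ℕ → ∀ i, Act i}
    (t : ℕ → Agt → Set L') (h0 : t 0 = fun _ => {H.init})
    (htr : ∀ k, H.kTransJ (t k) (τ k) (t (k + 1)))
    (hobs : ∀ k i, t k i ⊆ H.obs i (L k)) :
    ∀ k, t k = canon H L τ k
  | 0 => h0
  | k + 1 => by
      funext i
      obtain ⟨o, ⟨w, hw⟩, heq, hne⟩ := (htr k).1 i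
      obtain ⟨x, hx⟩ := hne
      have hxo : x ∈ o := by rw [heq] at hx; exact hx.1
      have ho : o = H.obs i (L (k + 1)) := by
        rw [hw] at hxo
        rw [hw, ← H.obs_eq i w x hxo, H.obs_eq i (L (k + 1)) x (hobs (k + 1) i hx)]
      rw [heq, ho, canon_unique H t h0 htr hobs k]
      rfl

end OneStep

/-- The main induction for `iterated_unique_lifted_play`. -/
theorem key_lifted_play (G : MAGIIAN Agt Loc Act) :
    ∀ (m : ℕ) (l : ℕ → Loc) (σ : ℕ → ∀ i, Act i), G.IsPlay l σ →
    ∃! s : ℕ → ExpLoc Agt Loc (m + 1),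
      s 0 = (iterExpand G (m + 1)).init ∧
      (∀ k, (iterExpand G (m + 1)).trans (s k) (σ k) (s (k + 1))) ∧
      (∀ k i, hatSet i m (s k i) ⊆ G.obs i (l k)) := by
  intro m
  induction m with
  | zero =>
    intro l σ h
    refine ⟨canon G l σ, ⟨rfl, fun k => canon_kTransJ G h.1 h.2 k,
      fun k i => canon_subset G h.1 k i⟩, ?_⟩
    intro t ⟨ht0, httr, hthat⟩
    funext k
    exact canon_unique G t ht0 httr (fun k i => hthat k i) k
  | succ m ih =>
    intro l σ h
    obtain ⟨s, ⟨hs0, hstr, hshat⟩, hsuniq⟩ := ih l σ h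
    set H : MAGIIAN Agt (ExpLoc Agt Loc (m + 1)) Act := iterExpand G (m + 1) with hH
    -- the `i`-th components of members of canonical knowledge states agree with `s`
    have hcomp : ∀ k i, ∀ u ∈ canon H s σ k i, u i = s k i := by
      intro k i u hu
      exact canon_subset H hs0 k i hu
    have hflat : ∀ k i, (⋃ u ∈ canon H s σ k i, u i) = s k i := by
      intro k i
      apply Set.Subset.antisymm
      · intro x hx
        simp only [Set.mem_iUnion] at hx
        obtain ⟨u, hu, hx⟩ := hx
        rwa [hcomp k i u hu] at hx
      · intro x hx
        simp only [Set.mem_iUnion]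
        exact ⟨s k, canon_mem H hs0 hstr k i, hx⟩
    refine ⟨canon H s σ, ⟨rfl, fun k => canon_kTransJ H hs0 hstr k, ?_⟩, ?_⟩
    · intro k i
      show hatSet i (m + 1) (canon H s σ k i) ⊆ G.obs i (l k)
      show hatSet i m (⋃ u ∈ canon H s σ k i, u i) ⊆ G.obs i (l k)
      rw [hflat k i]
      exact hshat k i
    · intro t ⟨ht0, httr, hthat⟩
      by_cases hA : Nonempty Agt
      · -- all members of `t k i` have the same `i`-th component
        have tcomp : ∀ k i, ∀ u ∈ t k i, ∀ v ∈ t k i, u i = v i := by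
          intro k
          match k with
          | 0 =>
            intro i u hu v hv
            rw [ht0] at hu hv
            have hu' : u = H.init := hu
            have hv' : v = H.init := hv
            rw [hu', hv']
          | k + 1 =>
            intro i u hu v hv
            obtain ⟨o, ⟨w, hw⟩, heq, _⟩ := (httr k).1 i
            rw [heq] at hu hv
            have hu' : u ∈ o := hu.1
            have hv' : v ∈ o := hv.1
            rw [hw] at hu' hv'
            have h1 : u i = w i := hu'
            have h2 : v i = w i := hv'
            rw [h1, h2]
        have ne : ∀ k, (⋂ i, t k i).Nonempty := by
          intro k
          match k with
          | 0 =>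
            obtain ⟨u, hu, _⟩ := (httr 0).2
            exact ⟨u, hu⟩
          | k + 1 =>
            obtain ⟨_, _, u', hu', _⟩ := (httr k).2
            exact ⟨u', hu'⟩
        set A : ℕ → ExpLoc Agt Loc (m + 1) := fun k => (ne k).choose with hAdef
        have hAk : ∀ k, A k ∈ ⋂ i, t k i := fun k => (ne k).choose_spec
        have hAmem : ∀ k i, A k ∈ t k i := by
          intro k i
          exact Set.mem_iInter.1 (hAk k) i
        have uniq_in : ∀ k u, u ∈ (⋂ i, t k i) → u = A k := by
          intro k u hu
          funext i
          exact tcomp k i u (Set.mem_iInter.1 hu i) (A k) (hAmem k i)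
        obtain ⟨i0⟩ := hA
        have hA0 : A 0 = H.init := by
          have := hAmem 0 i0
          rw [ht0] at this
          exact this
        have hAtr : ∀ k, H.trans (A k) (σ k) (A (k + 1)) := by
          intro k
          obtain ⟨u, hu, u', hu', htrans⟩ := (httr k).2
          rw [← uniq_in k u hu, ← uniq_in (k + 1) u' hu']
          exact htrans
        have hAflat : ∀ k i, (⋃ u ∈ t k i, u i) = A k i := by
          intro k i
          apply Set.Subset.antisymm
          · intro x hx
            simp only [Set.mem_iUnion] at hx
            obtain ⟨u, hu, hx⟩ := hx
            rwa [tcomp k i u hu (A k) (hAmem k i)] at hx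
          · intro x hx
            simp only [Set.mem_iUnion]
            exact ⟨A k, hAmem k i, hx⟩
        have hAhat : ∀ k i, hatSet i m (A k i) ⊆ G.obs i (l k) := by
          intro k i
          have := hthat k i
          rw [show hatSet i (m + 1) (t k i) = hatSet i m (⋃ u ∈ t k i, u i) from rfl,
            hAflat k i] at this
          exact this
        have hAs : A = s := hsuniq A ⟨hA0, hAtr, hAhat⟩
        have hobs : ∀ k i, t k i ⊆ H.obs i (s k) := by
          intro k i u hu
          show u i = s k i
          rw [tcomp k i u hu (A k) (hAmem k i), hAs]
        funext k
        exact canon_unique H t ht0 httr hobs k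
      · funext k
        funext i
        exact absurd ⟨i⟩ hA

end MAGIIAN

namespace MAGIIAN

variable {Agt Loc : Type} {Act : Agt → Type}

/-- For `j = m + 1 ≥ 1`, every full play `l_0 σ_0 l_1 σ_1 …` in `G` gives rise to
exactly one full play `s_0 σ_0 s_1 σ_1 …` in `G^{jK}` that is consistent with the
actions and the observations of the agents, i.e. such that `ŝ_k(i) ⊆ obs_i(l_k)` for
all agents `i` and all `k`. -/
theorem iterated_unique_lifted_play (G : MAGIIAN Agt Loc Act) (m : ℕ)
    (l : ℕ → Loc) (σ : ℕ → ∀ i, Act i) (h : G.IsPlay l σ) :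
    ∃! s : ℕ → ExpLoc Agt Loc (m + 1),
      s 0 = (iterExpand G (m + 1)).init ∧
      (∀ k, (iterExpand G (m + 1)).trans (s k) (σ k) (s (k + 1))) ∧
      (∀ k i, hatSet i m (s k i) ⊆ G.obs i (l k)) :=
  key_lifted_play G m l σ h

end MAGIIAN
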